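/- Let d ∈ ℕ, d ≥ 1, let γ > 0 be real, let α > 9/2 be real, and let v̂ : ℤ^d → ℂ satisfy ‖v̂‖_α < ∞. Then there exists a constant c₂ > 0, depending only on d, α, γ and v̂ (in particular independent of the modulus, the generating vector, the anti-aliasing family and the vector y), such that for every modulus n ≥ 1, every generating vector z ∈ ℤ^d, every minimal anti-aliasing family h_0,…,h_{n−1} for (z, n), and every y ∈ ℂ^n: ‖(D(DW − WD) − (DW − WD)D) y‖₂ ≤ c₂ · ‖(D + I)² y‖₂, where D, W ∈ ℂ^{n×n} are the matrices defined in the context and I is the identity matrix. -/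

import Mathlib

noncomputable section

/-- Integer dot product on `ℤ^d`. -/
def dotZ {d : ℕ} (h z : Fin d → ℤ) : ℤ := ∑ i, h i * z i

/-- The squared Korobov weight `r_α(h)² = ∏_j max(|h_j|^(2α), 1)`. -/
def korWeightSq {d : ℕ} (α : ℝ) (h : Fin d → ℤ) : ℝ :=
  ∏ j, max (|(h j : ℝ)| ^ (2 * α)) 1

/-- The squared Euclidean norm `‖h‖₂² = Σ_j h_j²` of `h ∈ ℤ^d`. -/
def normSq {d : ℕ} (h : Fin d → ℤ) : ℝ := ∑ j, (h j : ℝ) ^ 2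

/-- The Euclidean norm of a complex vector. -/
def vecNorm {ι : Type*} [Fintype ι] (y : ι → ℂ) : ℝ := Real.sqrt (∑ ξ, ‖y ξ‖ ^ 2)

/-- The diagonal matrix `D` with entries `2π²γ‖h_ξ‖₂²`. -/
def Dmat {d : ℕ} (γ : ℝ) (n : ℕ) (hfam : Fin n → Fin d → ℤ) :
    Matrix (Fin n) (Fin n) ℂ :=
  Matrix.diagonal fun ξ => ((2 * Real.pi ^ 2 * γ * normSq (hfam ξ) : ℝ) : ℂ)

/-- The multiplication matrix `W` with entries
`W_{ξ,ξ'} = (1/γ) Σ_{h·z ≡ ξ−ξ' (mod n)} v̂(h)`. -/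
def Wmat {d : ℕ} (γ : ℝ) (vhat : (Fin d → ℤ) → ℂ) (n : ℕ) (z : Fin d → ℤ) :
    Matrix (Fin n) (Fin n) ℂ :=
  Matrix.of fun ξ ξ' => (1 / (γ : ℂ)) *
    ∑' h : {h : Fin d → ℤ //
        ((dotZ h z : ZMod n)) = ((ξ : ℕ) : ZMod n) - ((ξ' : ℕ) : ZMod n)},
      vhat h.1

/-! The entries of `[D,[D,W]]` are `(a_ξ - a_ξ')² W_{ξξ'}` with `a_ξ = 2π²γ‖h_ξ‖²`. If
`h·z ≡ ξ - ξ'`, then `h + h_ξ'` lies in the class of `ξ` and `h_ξ - h` in that of `ξ'`, so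
minimality gives `|‖h_ξ‖ - ‖h_ξ'‖| ≤ ‖h‖` and hence `|a_ξ - a_ξ'|² ≲ (1 + ‖h‖²)² (1 + a_ξ')²`.
Thus `[D,[D,W]]` is dominated entrywise by a constant times `q(ξ - ξ') (1 + a_ξ')²`, where `q(μ)`
is the sum of `(1 + ‖h‖²)² |v̂(h)|` over the lattice class `μ`. The kernel `q(ξ - ξ')` has all
row and column sums equal to `Σ_h (1 + ‖h‖²)² |v̂(h)|`, so the Schur test bounds the operator by
a multiple of `(D + I)²`. That sum is finite by AM-GM against the Korobov weight, since
`(1 + ‖h‖²)⁴ / r_α(h)² ≤ ∏_j 16 max(|h_j|, 1)^(8 - 2α)` is summable for `α > 9/2`. -/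

open Finset Matrix

namespace Rank1Lattice

lemma one_add_sum_le_prod_one_add {ι R : Type*} [CommSemiring R] [PartialOrder R]
    [IsOrderedRing R] (s : Finset ι) {f : ι → R} (hf : ∀ i ∈ s, 0 ≤ f i) :
    1 + ∑ i ∈ s, f i ≤ ∏ i ∈ s, (1 + f i) := by
  classical
  induction s using Finset.induction_on with
  | empty => simp
  | insert a s ha ih =>
    rw [sum_insert ha, prod_insert ha]
    have hfa := hf a (mem_insert_self a s)
    have hs := ih fun i hi => hf i (mem_insert_of_mem hi)
    have hsum : 0 ≤ ∑ i ∈ s, f i := sum_nonneg fun i hi => hf i (mem_insert_of_mem hi)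
    calc 1 + (f a + ∑ i ∈ s, f i)
        ≤ 1 + (f a + ∑ i ∈ s, f i) + f a * ∑ i ∈ s, f i :=
          le_add_of_nonneg_right (mul_nonneg hfa hsum)
      _ = (1 + f a) * (1 + ∑ i ∈ s, f i) := by ring
      _ ≤ (1 + f a) * ∏ i ∈ s, (1 + f i) := by gcongr; exact add_nonneg zero_le_one hfa

lemma summable_fin_pi_prod {β : Type*} {ψ : β → ℝ} (hψ₀ : ∀ k, 0 ≤ ψ k) (hψ : Summable ψ) :
    ∀ d : ℕ, Summable fun h : Fin d → β => ∏ j, ψ (h j)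
  | 0 => summable_of_hasFiniteSupport (Set.toFinite _)
  | d + 1 => by
    have hprod : Summable fun p : β × (Fin d → β) => ψ p.1 * ∏ j, ψ (p.2 j) :=
      Summable.mul_of_nonneg (f := ψ) (g := fun h : Fin d → β => ∏ j, ψ (h j)) hψ
        (summable_fin_pi_prod hψ₀ hψ d) hψ₀
        fun h => prod_nonneg fun j _ => hψ₀ _
    refine (hprod.comp_injective (Fin.consEquiv fun _ => β).symm.injective).congr fun h => ?_
    simp [Fin.prod_univ_succ, Fin.consEquiv, Fin.tail]

lemma summable_max_abs_one_rpow_neg {b : ℝ} (hb : 1 < b) :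
    Summable fun k : ℤ => max |(k : ℝ)| 1 ^ (-b) := by
  refine (Real.summable_abs_int_rpow hb).congr_cofinite ?_
  filter_upwards [Filter.eventually_cofinite_ne 0] with k hk
  rw [max_eq_left]
  exact_mod_cast Int.one_le_abs hk

lemma abs_norm_sq_sub_norm_sq_le {E : Type*} [SeminormedAddCommGroup E] {u v w : E}
    (hu : ‖u‖ ≤ ‖w + v‖) (hv : ‖v‖ ≤ ‖u - w‖) :
    |‖u‖ ^ 2 - ‖v‖ ^ 2| ≤ 2 * (1 + ‖w‖ ^ 2) * (1 + ‖v‖ ^ 2) := by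
  have h₁ : ‖u‖ ≤ ‖w‖ + ‖v‖ := hu.trans (norm_add_le w v)
  have h₂ : ‖v‖ ≤ ‖u‖ + ‖w‖ := hv.trans (norm_sub_le u w)
  have h₃ : |‖u‖ ^ 2 - ‖v‖ ^ 2| ≤ ‖w‖ * (‖w‖ + 2 * ‖v‖) := by
    rw [sq_sub_sq, abs_mul, abs_of_nonneg (by positivity : 0 ≤ ‖u‖ + ‖v‖), mul_comm]
    exact mul_le_mul (abs_sub_le_iff.2 ⟨by linarith, by linarith⟩) (by linarith)
      (by positivity) (norm_nonneg w)
  nlinarith [norm_nonneg w, norm_nonneg v, sq_nonneg (‖w‖ - ‖v‖),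
    mul_nonneg (sq_nonneg ‖w‖) (sq_nonneg ‖v‖)]

section Schur

variable {ι : Type*} [Fintype ι]

lemma sum_sq_sum_mul_le_of_sum_le {b : ι → ι → ℝ} {G : ℝ} (hG : 0 ≤ G) (hb : ∀ i j, 0 ≤ b i j)
    (hrow : ∀ i, ∑ j, b i j ≤ G) (hcol : ∀ j, ∑ i, b i j ≤ G) (u : ι → ℝ) :
    ∑ i, (∑ j, b i j * u j) ^ 2 ≤ G ^ 2 * ∑ j, u j ^ 2 := by
  have hrow_sq : ∀ i, (∑ j, b i j * u j) ^ 2 ≤ G * ∑ j, b i j * u j ^ 2 := fun i =>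
    calc (∑ j, b i j * u j) ^ 2 ≤ (∑ j, b i j) * ∑ j, b i j * u j ^ 2 :=
          sum_sq_le_sum_mul_sum_of_sq_le_mul _ (fun j _ => hb i j)
            (fun j _ => mul_nonneg (hb i j) (sq_nonneg _)) fun j _ => le_of_eq (by ring)
      _ ≤ G * ∑ j, b i j * u j ^ 2 :=
          mul_le_mul_of_nonneg_right (hrow i)
            (sum_nonneg fun j _ => mul_nonneg (hb i j) (sq_nonneg _))
  calc ∑ i, (∑ j, b i j * u j) ^ 2 ≤ ∑ i, G * ∑ j, b i j * u j ^ 2 :=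
        sum_le_sum fun i _ => hrow_sq i
    _ = G * ∑ j, (∑ i, b i j) * u j ^ 2 := by rw [← mul_sum, sum_comm]; simp only [sum_mul]
    _ ≤ G * ∑ j, G * u j ^ 2 := by gcongr with j; exact hcol j
    _ = G ^ 2 * ∑ j, u j ^ 2 := by rw [← mul_sum]; ring

lemma vecNorm_mulVec_le_of_norm_le {M : Matrix ι ι ℂ} {b : ι → ι → ℝ} {w : ι → ℝ} {G : ℝ}
    (hG : 0 ≤ G) (hb : ∀ i j, 0 ≤ b i j) (hM : ∀ i j, ‖M i j‖ ≤ b i j * w j)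
    (hrow : ∀ i, ∑ j, b i j ≤ G) (hcol : ∀ j, ∑ i, b i j ≤ G) (y : ι → ℂ) :
    vecNorm (M *ᵥ y) ≤ G * vecNorm fun j => (w j : ℂ) * y j := by
  have hentry : ∀ i, ‖(M *ᵥ y) i‖ ≤ ∑ j, b i j * ‖(w j : ℂ) * y j‖ := fun i =>
    calc ‖(M *ᵥ y) i‖ ≤ ∑ j, ‖M i j‖ * ‖y j‖ := by
          simpa only [mulVec, dotProduct, norm_mul] using
            norm_sum_le univ fun j => M i j * y j
      _ ≤ ∑ j, b i j * ‖(w j : ℂ) * y j‖ := sum_le_sum fun j _ => by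
          rw [norm_mul (w j : ℂ), Complex.norm_real, Real.norm_eq_abs, ← mul_assoc]
          gcongr
          exact (hM i j).trans (mul_le_mul_of_nonneg_left (le_abs_self _) (hb i j))
  calc vecNorm (M *ᵥ y) ≤ √(G ^ 2 * ∑ j, ‖(w j : ℂ) * y j‖ ^ 2) := by
        refine Real.sqrt_le_sqrt ((sum_le_sum fun i _ => ?_).trans
          (sum_sq_sum_mul_le_of_sum_le hG hb hrow hcol fun j => ‖(w j : ℂ) * y j‖))
        gcongr
        exact hentry i
    _ = G * vecNorm fun j => (w j : ℂ) * y j := by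
        rw [Real.sqrt_mul (sq_nonneg G), Real.sqrt_sq hG, vecNorm]

end Schur

section MatrixIdentities

variable {ι : Type*} [Fintype ι] [DecidableEq ι]

lemma diagonal_double_commutator_apply {R : Type*} [CommRing R] (a : ι → R) (W : Matrix ι ι R)
    (i j : ι) :
    (diagonal a * (diagonal a * W - W * diagonal a)
      - (diagonal a * W - W * diagonal a) * diagonal a) i j = (a i - a j) ^ 2 * W i j := by
  simp only [Matrix.sub_apply, diagonal_mul, mul_diagonal]
  ring

lemma diagonal_ofReal_add_one_sq_mulVec (a : ι → ℝ) (y : ι → ℂ) :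
    (diagonal (fun i => (a i : ℂ)) + 1) ^ 2 *ᵥ y = fun i => (((a i + 1) ^ 2 : ℝ) : ℂ) * y i := by
  ext i
  rw [← diagonal_one, diagonal_add, diagonal_pow, mulVec_diagonal]
  push_cast
  rfl

end MatrixIdentities

section ZModSums

variable {n : ℕ} [NeZero n] {M : Type*} [AddCommMonoid M]

variable (n) in
lemma natCast_fin_bijective : Function.Bijective fun ξ : Fin n => ((ξ : ℕ) : ZMod n) := by
  obtain ⟨k, rfl⟩ := Nat.exists_eq_succ_of_ne_zero (NeZero.ne n)
  have hid : (fun ξ : Fin (k + 1) => ((ξ : ℕ) : ZMod (k + 1))) = id := funext Fin.cast_val_eq_self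
  exact hid ▸ Function.bijective_id

lemma sum_fin_sub_natCast (f : ZMod n → M) (μ : ZMod n) :
    ∑ ξ : Fin n, f (μ - (ξ : ℕ)) = ∑ ν, f ν :=
  ((natCast_fin_bijective n).sum_comp fun ν => f (μ - ν)).trans ((Equiv.subLeft μ).sum_comp f)

lemma sum_fin_natCast_sub (f : ZMod n → M) (μ : ZMod n) :
    ∑ ξ : Fin n, f ((ξ : ℕ) - μ) = ∑ ν, f ν :=
  ((natCast_fin_bijective n).sum_comp fun ν => f (ν - μ)).trans ((Equiv.subRight μ).sum_comp f)

end ZModSums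

lemma normSq_nonneg {d : ℕ} (h : Fin d → ℤ) : 0 ≤ normSq h :=
  sum_nonneg fun _ _ => sq_nonneg _

lemma korWeightSq_pos {d : ℕ} (α : ℝ) (h : Fin d → ℤ) : 0 < korWeightSq α h :=
  prod_pos fun _ _ => lt_max_of_lt_right one_pos

lemma korWeightSq_eq_prod_max_rpow {d : ℕ} {α : ℝ} (hα : 0 ≤ α) (h : Fin d → ℤ) :
    korWeightSq α h = ∏ j, max |(h j : ℝ)| 1 ^ (2 * α) := by
  refine prod_congr rfl fun j _ => ?_
  rw [Real.rpow_max (abs_nonneg _) zero_le_one (by linarith), Real.one_rpow]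

lemma summable_one_add_sq_pow_four_div {α : ℝ} (hα : 9 / 2 < α) :
    Summable fun k : ℤ => (1 + (k : ℝ) ^ 2) ^ 4 / max |(k : ℝ)| 1 ^ (2 * α) := by
  refine Summable.of_nonneg_of_le (fun k => by positivity) (fun k => ?_)
    ((summable_max_abs_one_rpow_neg (b := 2 * α - 8) (by linarith)).mul_left 16)
  have hm : 0 < max |(k : ℝ)| 1 := lt_max_of_lt_right one_pos
  have hsq : 1 + (k : ℝ) ^ 2 ≤ 2 * max |(k : ℝ)| 1 ^ 2 := by
    rw [← sq_abs]
    nlinarith [le_max_left |(k : ℝ)| 1, le_max_right |(k : ℝ)| 1, abs_nonneg (k : ℝ)]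
  rw [div_le_iff₀ (by positivity), mul_assoc, ← Real.rpow_add hm]
  calc (1 + (k : ℝ) ^ 2) ^ 4 ≤ (2 * max |(k : ℝ)| 1 ^ 2) ^ 4 := by gcongr
    _ = 16 * max |(k : ℝ)| 1 ^ (-(2 * α - 8) + 2 * α) := by
      rw [show -(2 * α - 8) + 2 * α = ((8 : ℕ) : ℝ) by norm_num, Real.rpow_natCast]
      ring

lemma summable_one_add_normSq_pow_four_div {d : ℕ} {α : ℝ} (hα : 9 / 2 < α) :
    Summable fun h : Fin d → ℤ => (1 + normSq h) ^ 4 / korWeightSq α h := by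
  refine Summable.of_nonneg_of_le
    (fun h => div_nonneg (pow_nonneg (by linarith [normSq_nonneg h]) 4) (korWeightSq_pos α h).le)
    (fun h => ?_) (summable_fin_pi_prod (fun k => by positivity)
      (summable_one_add_sq_pow_four_div hα) d)
  rw [korWeightSq_eq_prod_max_rpow (by linarith), prod_div_distrib, prod_pow]
  gcongr
  · linarith [normSq_nonneg h]
  · exact one_add_sum_le_prod_one_add _ fun j _ => sq_nonneg _

lemma summable_one_add_normSq_sq_mul_norm {d : ℕ} {α : ℝ} (hα : 9 / 2 < α)
    {v : (Fin d → ℤ) → ℂ} (hv : Summable fun h => ‖v h‖ ^ 2 * korWeightSq α h) :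
    Summable fun h => (1 + normSq h) ^ 2 * ‖v h‖ := by
  refine Summable.of_nonneg_of_le (fun h => by positivity) (fun h => ?_)
    ((hv.add (summable_one_add_normSq_pow_four_div hα)).div_const 2)
  have hk := korWeightSq_pos α h
  rw [le_div_iff₀ two_pos, ← sub_nonneg]
  have key : ‖v h‖ ^ 2 * korWeightSq α h + (1 + normSq h) ^ 4 / korWeightSq α h
      - (1 + normSq h) ^ 2 * ‖v h‖ * 2
      = (‖v h‖ * korWeightSq α h - (1 + normSq h) ^ 2) ^ 2 / korWeightSq α h := by
    field_simp
    ring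
  rw [key]
  positivity

def toEuclidean (d : ℕ) : (Fin d → ℤ) →+ EuclideanSpace ℝ (Fin d) :=
  AddMonoidHom.mk' (fun h => WithLp.toLp 2 fun j => (h j : ℝ)) fun a b => by ext; simp

lemma normSq_eq_norm_sq {d : ℕ} (h : Fin d → ℤ) : normSq h = ‖toEuclidean d h‖ ^ 2 := by
  simp [normSq, toEuclidean, EuclideanSpace.norm_sq_eq]

lemma dotZ_add {d : ℕ} (a b z : Fin d → ℤ) : dotZ (a + b) z = dotZ a z + dotZ b z := by
  simp [dotZ, add_mul, sum_add_distrib]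

lemma dotZ_sub {d : ℕ} (a b z : Fin d → ℤ) : dotZ (a - b) z = dotZ a z - dotZ b z := by
  simp [dotZ, sub_mul, sum_sub_distrib]

structure IsMinimalAntiAliasingFamily {d n : ℕ} (z : Fin d → ℤ) (hfam : Fin n → Fin d → ℤ) :
    Prop where
  dotZ_eq : ∀ ξ : Fin n, (dotZ (hfam ξ) z : ZMod n) = ((ξ : ℕ) : ZMod n)
  normSq_le : ∀ (ξ : Fin n) (h : Fin d → ℤ),
    (dotZ h z : ZMod n) = ((ξ : ℕ) : ZMod n) → normSq (hfam ξ) ≤ normSq h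

namespace IsMinimalAntiAliasingFamily

variable {d n : ℕ} {z : Fin d → ℤ} {hfam : Fin n → Fin d → ℤ}

lemma abs_normSq_sub_le (hF : IsMinimalAntiAliasingFamily z hfam) {ξ ξ' : Fin n}
    {h : Fin d → ℤ} (hh : (dotZ h z : ZMod n) = (ξ : ℕ) - (ξ' : ℕ)) :
    |normSq (hfam ξ) - normSq (hfam ξ')| ≤ 2 * (1 + normSq h) * (1 + normSq (hfam ξ')) := by
  have hu := hF.normSq_le ξ (h + hfam ξ') (by
    rw [dotZ_add, Int.cast_add, hh, hF.dotZ_eq, sub_add_cancel])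
  have hv := hF.normSq_le ξ' (hfam ξ - h) (by
    rw [dotZ_sub, Int.cast_sub, hh, hF.dotZ_eq, sub_sub_cancel])
  simp only [normSq_eq_norm_sq, map_add, map_sub] at hu hv ⊢
  exact abs_norm_sq_sub_norm_sq_le
    ((pow_le_pow_iff_left₀ (norm_nonneg _) (norm_nonneg _) two_ne_zero).1 hu)
    ((pow_le_pow_iff_left₀ (norm_nonneg _) (norm_nonneg _) two_ne_zero).1 hv)

lemma sq_mul_normSq_sub_le (hF : IsMinimalAntiAliasingFamily z hfam) {c : ℝ} (hc : 0 ≤ c)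
    {ξ ξ' : Fin n} {h : Fin d → ℤ} (hh : (dotZ h z : ZMod n) = (ξ : ℕ) - (ξ' : ℕ)) :
    (c * normSq (hfam ξ) - c * normSq (hfam ξ')) ^ 2
      ≤ (2 * max c 1) ^ 2 * (1 + normSq h) ^ 2 * (c * normSq (hfam ξ') + 1) ^ 2 := by
  have hN := normSq_nonneg (hfam ξ')
  have hscale : c * (1 + normSq (hfam ξ')) ≤ max c 1 * (c * normSq (hfam ξ') + 1) := by
    nlinarith [le_max_left c 1, le_max_right c 1, mul_nonneg hc hN]
  calc (c * normSq (hfam ξ) - c * normSq (hfam ξ')) ^ 2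
      = c ^ 2 * |normSq (hfam ξ) - normSq (hfam ξ')| ^ 2 := by rw [sq_abs]; ring
    _ ≤ c ^ 2 * (2 * (1 + normSq h) * (1 + normSq (hfam ξ'))) ^ 2 := by
      gcongr
      exact hF.abs_normSq_sub_le hh
    _ = (2 * (1 + normSq h)) ^ 2 * (c * (1 + normSq (hfam ξ'))) ^ 2 := by ring
    _ ≤ (2 * (1 + normSq h)) ^ 2 * (max c 1 * (c * normSq (hfam ξ') + 1)) ^ 2 := by
      gcongr
    _ = _ := by ring

end IsMinimalAntiAliasingFamily

section Fibers

variable {d n : ℕ}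

variable (n) in
def fiberSum {M : Type*} [AddCommMonoid M] [TopologicalSpace M] (z : Fin d → ℤ)
    (f : (Fin d → ℤ) → M) (μ : ZMod n) : M :=
  ∑' h : {h : Fin d → ℤ // (dotZ h z : ZMod n) = μ}, f h

lemma Wmat_apply (γ : ℝ) (vhat : (Fin d → ℤ) → ℂ) (z : Fin d → ℤ) (ξ ξ' : Fin n) :
    Wmat γ vhat n z ξ ξ' = 1 / (γ : ℂ) * fiberSum n z vhat ((ξ : ℕ) - (ξ' : ℕ)) :=
  rfl

lemma norm_fiberSum_le {E : Type*} [SeminormedAddCommGroup E] {z : Fin d → ℤ}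
    {f : (Fin d → ℤ) → E} (hf : Summable fun h => ‖f h‖) (μ : ZMod n) :
    ‖fiberSum n z f μ‖ ≤ fiberSum n z (fun h => ‖f h‖) μ :=
  norm_tsum_le_tsum_norm (hf.subtype _)

lemma fiberSum_mul_left (z : Fin d → ℤ) (a : ℝ) (f : (Fin d → ℤ) → ℝ) (μ : ZMod n) :
    fiberSum n z (fun h => a * f h) μ = a * fiberSum n z f μ :=
  tsum_mul_left

lemma fiberSum_nonneg {z : Fin d → ℤ} {f : (Fin d → ℤ) → ℝ} (hf : ∀ h, 0 ≤ f h) (μ : ZMod n) :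
    0 ≤ fiberSum n z f μ :=
  tsum_nonneg fun h => hf h.1

lemma fiberSum_mono {z : Fin d → ℤ} {f g : (Fin d → ℤ) → ℝ} {μ : ZMod n} (hf : Summable f)
    (hg : Summable g) (hfg : ∀ h, (dotZ h z : ZMod n) = μ → f h ≤ g h) :
    fiberSum n z f μ ≤ fiberSum n z g μ :=
  Summable.tsum_le_tsum (fun h => hfg h.1 h.2) (hf.subtype _) (hg.subtype _)

end Fibers

lemma sum_fiberSum {d n : ℕ} [NeZero n] {E : Type*} [NormedAddCommGroup E] [CompleteSpace E]
    (z : Fin d → ℤ) {f : (Fin d → ℤ) → E} (hf : Summable f) :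
    ∑ μ, fiberSum n z f μ = ∑' h, f h :=
  (hasSum_fintype (fiberSum n z f)).unique
    (hf.hasSum.tsum_fiberwise fun h => (dotZ h z : ZMod n))

lemma norm_sq_sub_mul_Wmat_le {d n : ℕ} {γ c : ℝ} (hγ : 0 < γ) (hc : 0 ≤ c)
    {vhat : (Fin d → ℤ) → ℂ} (hv : Summable fun h => (1 + normSq h) ^ 2 * ‖vhat h‖)
    {z : Fin d → ℤ} {hfam : Fin n → Fin d → ℤ} (hF : IsMinimalAntiAliasingFamily z hfam)
    (ξ ξ' : Fin n) :
    ‖(((c * normSq (hfam ξ) - c * normSq (hfam ξ')) ^ 2 : ℝ) : ℂ) * Wmat γ vhat n z ξ ξ'‖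
      ≤ (2 * max c 1) ^ 2 / γ
          * fiberSum n z (fun h => (1 + normSq h) ^ 2 * ‖vhat h‖) ((ξ : ℕ) - (ξ' : ℕ))
          * (c * normSq (hfam ξ') + 1) ^ 2 := by
  set μ : ZMod n := (ξ : ℕ) - (ξ' : ℕ)
  set δ := (c * normSq (hfam ξ) - c * normSq (hfam ξ')) ^ 2
  set C := (2 * max c 1) ^ 2 * (c * normSq (hfam ξ') + 1) ^ 2
  have hnorm : Summable fun h => ‖vhat h‖ := hv.of_nonneg_of_le (fun h => norm_nonneg _)
    fun h => le_mul_of_one_le_left (norm_nonneg _)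
      (one_le_pow₀ (by linarith [normSq_nonneg h]))
  have hδ : ‖fiberSum n z vhat μ‖ * δ
      ≤ C * fiberSum n z (fun h => (1 + normSq h) ^ 2 * ‖vhat h‖) μ :=
    calc ‖fiberSum n z vhat μ‖ * δ ≤ fiberSum n z (fun h => ‖vhat h‖) μ * δ := by
          gcongr
          exact norm_fiberSum_le hnorm μ
      _ = fiberSum n z (fun h => δ * ‖vhat h‖) μ := by rw [fiberSum_mul_left, mul_comm]
      _ ≤ fiberSum n z (fun h => C * ((1 + normSq h) ^ 2 * ‖vhat h‖)) μ :=
          fiberSum_mono (hnorm.mul_left δ) (hv.mul_left C) fun h hh => by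
            calc δ * ‖vhat h‖
                ≤ (2 * max c 1) ^ 2 * (1 + normSq h) ^ 2 * (c * normSq (hfam ξ') + 1) ^ 2
                    * ‖vhat h‖ := by gcongr; exact hF.sq_mul_normSq_sub_le hc hh
              _ = C * ((1 + normSq h) ^ 2 * ‖vhat h‖) := by ring
      _ = _ := fiberSum_mul_left z C _ μ
  rw [Wmat_apply, norm_mul, norm_mul, Complex.norm_real, Real.norm_of_nonneg (sq_nonneg _),
    norm_div, norm_one, Complex.norm_real, Real.norm_of_nonneg hγ.le]
  calc δ * (1 / γ * ‖fiberSum n z vhat μ‖) = 1 / γ * (‖fiberSum n z vhat μ‖ * δ) := by ring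
    _ ≤ 1 / γ * (C * fiberSum n z (fun h => (1 + normSq h) ^ 2 * ‖vhat h‖) μ) := by gcongr
    _ = _ := by ring

end Rank1Lattice

open Rank1Lattice

theorem rank1_second_commutator_bound_general
    (d : ℕ) (γ : ℝ) (hγ : 0 < γ) (α : ℝ) (hα : 9 / 2 < α)
    (vhat : (Fin d → ℤ) → ℂ)
    (hv : Summable fun h : Fin d → ℤ => ‖vhat h‖ ^ 2 * korWeightSq α h) :
    ∃ c₂ : ℝ, 0 < c₂ ∧
      ∀ (n : ℕ), 1 ≤ n → ∀ (z : Fin d → ℤ) (hfam : Fin n → Fin d → ℤ),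
        (∀ ξ : Fin n, ((dotZ (hfam ξ) z : ZMod n)) = ((ξ : ℕ) : ZMod n)) →
        (∀ (ξ : Fin n) (h : Fin d → ℤ),
            ((dotZ h z : ZMod n)) = ((ξ : ℕ) : ZMod n) → normSq (hfam ξ) ≤ normSq h) →
        ∀ y : Fin n → ℂ,
          vecNorm ((Dmat γ n hfam * (Dmat γ n hfam * Wmat γ vhat n z
                - Wmat γ vhat n z * Dmat γ n hfam)
              - (Dmat γ n hfam * Wmat γ vhat n z
                - Wmat γ vhat n z * Dmat γ n hfam) * Dmat γ n hfam).mulVec y)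
            ≤ c₂ * vecNorm (((Dmat γ n hfam + 1) ^ 2).mulVec y) := by
  set c := 2 * Real.pi ^ 2 * γ
  set φ := fun h : Fin d → ℤ => (1 + normSq h) ^ 2 * ‖vhat h‖
  have hφ : Summable φ := summable_one_add_normSq_sq_mul_norm hα hv
  have hφ₀ : ∀ h, 0 ≤ φ h := fun h => by positivity
  set K := (2 * max c 1) ^ 2 / γ
  have hK : 0 ≤ K := by positivity
  have hG : 0 ≤ ∑' h, φ h := tsum_nonneg hφ₀
  refine ⟨K * (∑' h, φ h + 1), by positivity, ?_⟩
  intro n hn z hfam hdot hmin y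
  have : NeZero n := ⟨by omega⟩
  have hsum : ∑ μ, K * fiberSum n z φ μ ≤ K * (∑' h, φ h + 1) := by
    rw [← mul_sum, sum_fiberSum z hφ]
    gcongr
    linarith
  rw [Dmat, diagonal_ofReal_add_one_sq_mulVec]
  refine vecNorm_mulVec_le_of_norm_le (by positivity)
    (fun _ _ => mul_nonneg hK (fiberSum_nonneg hφ₀ _)) (fun ξ ξ' => ?_)
    (fun ξ => by rw [sum_fin_sub_natCast (fun μ => K * fiberSum n z φ μ)]; exact hsum)
    (fun ξ' => by rw [sum_fin_natCast_sub (fun μ => K * fiberSum n z φ μ)]; exact hsum) y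
  rw [diagonal_double_commutator_apply, ← Complex.ofReal_sub, ← Complex.ofReal_pow]
  exact norm_sq_sub_mul_Wmat_le hγ (by positivity) hφ ⟨hdot, hmin⟩ ξ ξ'

/-- **Rank-1 lattice second commutator bound.** For `α > 9/2` and `‖v̂‖_α < ∞`,
there is `c₂ > 0`, independent of the modulus `n`, the generating vector `z`,
the minimal anti-aliasing family and `y`, such that
`‖[D,[D,W]] y‖₂ ≤ c₂ ‖(D + I)² y‖₂`. -/
theorem rank1_second_commutator_bound
    (d : ℕ) (hd : 1 ≤ d) (γ : ℝ) (hγ : 0 < γ) (α : ℝ) (hα : 9 / 2 < α)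
    (vhat : (Fin d → ℤ) → ℂ)
    (hv : Summable fun h : Fin d → ℤ => ‖vhat h‖ ^ 2 * korWeightSq α h) :
    ∃ c₂ : ℝ, 0 < c₂ ∧
      ∀ (n : ℕ), 1 ≤ n → ∀ (z : Fin d → ℤ) (hfam : Fin n → Fin d → ℤ),
        (∀ ξ : Fin n, ((dotZ (hfam ξ) z : ZMod n)) = ((ξ : ℕ) : ZMod n)) →
        (∀ (ξ : Fin n) (h : Fin d → ℤ),
            ((dotZ h z : ZMod n)) = ((ξ : ℕ) : ZMod n) → normSq (hfam ξ) ≤ normSq h) →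
        ∀ y : Fin n → ℂ,
          vecNorm ((Dmat γ n hfam * (Dmat γ n hfam * Wmat γ vhat n z
                - Wmat γ vhat n z * Dmat γ n hfam)
              - (Dmat γ n hfam * Wmat γ vhat n z
                - Wmat γ vhat n z * Dmat γ n hfam) * Dmat γ n hfam).mulVec y)
            ≤ c₂ * vecNorm (((Dmat γ n hfam + 1) ^ 2).mulVec y) :=
  rank1_second_commutator_bound_general d γ hγ α hα vhat hv

end
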